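/- arXiv:2008.02315 — 4 statements merged into one kernel-verified Lean document; each statement's English description precedes it below -/
import Mathlib

section
/- Given positive reals a_1,...,a_n and b_1,...,b_n such that the sequence a_i/b_i is monotone increasing in i, the sequence z_i = (∑_{j=i}^n a_j)/(∑_{j=i}^n b_j) is also monotone increasing in i. -/
/-- Given positive reals `a i`, `b i` (indexed by `Fin n`) with `a i / b i` monotone
increasing, the tail-sum ratio `z i = (∑_{j ≥ i} a j) / (∑_{j ≥ i} b j)` is monotone
increasing. -/
theorem tail_sum_ratio_monotone (n : ℕ) (a b : Fin n → ℝ)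
    (ha : ∀ i, 0 < a i) (hb : ∀ i, 0 < b i)
    (hmono : ∀ i j : Fin n, i ≤ j → a i / b i ≤ a j / b j) :
    ∀ i j : Fin n, i ≤ j →
      (∑ k ∈ Finset.Ici i, a k) / (∑ k ∈ Finset.Ici i, b k) ≤
      (∑ k ∈ Finset.Ici j, a k) / (∑ k ∈ Finset.Ici j, b k) := by
  intro i j hij
  have hsplit : Finset.Ico i j ∪ Finset.Ici j = Finset.Ici i := by
    ext k
    simp only [Finset.mem_union, Finset.mem_Ico, Finset.mem_Ici, Fin.le_def, Fin.lt_def] at *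
    omega
  have hdisj : Disjoint (Finset.Ico i j) (Finset.Ici j) := by
    rw [Finset.disjoint_left]
    intro k hk hk'
    simp only [Finset.mem_Ico, Finset.mem_Ici, Fin.le_def, Fin.lt_def] at hk hk'
    omega
  set A1 := ∑ k ∈ Finset.Ico i j, a k with hA1
  set A2 := ∑ k ∈ Finset.Ici j, a k with hA2
  set B1 := ∑ k ∈ Finset.Ico i j, b k with hB1
  set B2 := ∑ k ∈ Finset.Ici j, b k with hB2
  have hAi : ∑ k ∈ Finset.Ici i, a k = A1 + A2 := by
    rw [← hsplit, Finset.sum_union hdisj]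
  have hBi : ∑ k ∈ Finset.Ici i, b k = B1 + B2 := by
    rw [← hsplit, Finset.sum_union hdisj]
  have hB2pos : 0 < B2 :=
    Finset.sum_pos (fun k _ => hb k) ⟨j, Finset.mem_Ici.2 le_rfl⟩
  have hB1nonneg : 0 ≤ B1 := Finset.sum_nonneg fun k _ => (hb k).le
  have hBipos : 0 < B1 + B2 := by linarith
  have key : A1 * B2 ≤ B1 * A2 := by
    rw [Finset.sum_mul_sum, Finset.sum_mul_sum]
    apply Finset.sum_le_sum
    intro k hk
    apply Finset.sum_le_sum
    intro m hm
    have hkm : k ≤ m := le_trans (Finset.mem_Ico.1 hk).2.le (Finset.mem_Ici.1 hm)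
    have := hmono k m hkm
    have hbk := hb k
    have hbm := hb m
    rw [div_le_div_iff₀ hbk hbm] at this
    linarith
  rw [hAi, hBi, div_le_div_iff₀ hBipos hB2pos]
  nlinarith
end

section
/- Given positive reals a_1,...,a_n and b_1,...,b_n such that the sequence a_i/b_i is strictly monotone increasing, the tail-sum ratio z_i = (∑_{j=i}^n a_j)/(∑_{j=i}^n b_j) is strictly monotone increasing in i. -/
/-- Given positive reals `a i`, `b i` (indexed by `Fin n`) with `a i / b i` strictly
monotone increasing, the tail-sum ratio `z i = (∑_{j ≥ i} a j) / (∑_{j ≥ i} b j)` is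
strictly monotone increasing. -/
theorem tail_sum_ratio_strictMono (n : ℕ) (a b : Fin n → ℝ)
    (ha : ∀ i, 0 < a i) (hb : ∀ i, 0 < b i)
    (hmono : ∀ i j : Fin n, i < j → a i / b i < a j / b j) :
    ∀ i j : Fin n, i < j →
      (∑ k ∈ Finset.Ici i, a k) / (∑ k ∈ Finset.Ici i, b k) <
      (∑ k ∈ Finset.Ici j, a k) / (∑ k ∈ Finset.Ici j, b k) := by
  intro i j hij
  have hS : (Finset.Ico i j).Nonempty := ⟨i, by simp [hij]⟩
  have hT : (Finset.Ici j).Nonempty := ⟨j, by simp⟩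
  have hsplit : Finset.Ici i = Finset.Ico i j ∪ Finset.Ici j := by
    ext k
    simp only [Finset.mem_Ici, Finset.mem_union, Finset.mem_Ico]
    constructor
    · intro h
      rcases lt_or_ge k j with h' | h'
      · exact Or.inl ⟨h, h'⟩
      · exact Or.inr h'
    · rintro (⟨h1, _⟩ | h1)
      · exact h1
      · exact le_trans hij.le h1
  have hdisj : Disjoint (Finset.Ico i j) (Finset.Ici j) := by
    rw [Finset.disjoint_left]
    intro k hk hk'
    simp only [Finset.mem_Ico] at hk
    simp only [Finset.mem_Ici] at hk'
    exact absurd hk' (not_le.2 hk.2)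
  set AS := ∑ k ∈ Finset.Ico i j, a k with hAS
  set AT := ∑ k ∈ Finset.Ici j, a k with hAT
  set BS := ∑ k ∈ Finset.Ico i j, b k with hBS
  set BT := ∑ k ∈ Finset.Ici j, b k with hBT
  have hBSpos : 0 < BS := Finset.sum_pos (fun k _ => hb k) hS
  have hBTpos : 0 < BT := Finset.sum_pos (fun k _ => hb k) hT
  have hAi : (∑ k ∈ Finset.Ici i, a k) = AS + AT := by
    rw [hsplit, Finset.sum_union hdisj]
  have hBi : (∑ k ∈ Finset.Ici i, b k) = BS + BT := by
    rw [hsplit, Finset.sum_union hdisj]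
  have key : AS * BT < AT * BS := by
    have h1 : ∀ k ∈ Finset.Ico i j, a k * BT < AT * b k := by
      intro k hk
      simp only [Finset.mem_Ico] at hk
      rw [hBT, hAT, Finset.mul_sum, Finset.sum_mul]
      refine Finset.sum_lt_sum_of_nonempty hT (fun m hm => ?_)
      simp only [Finset.mem_Ici] at hm
      have hkm : k < m := lt_of_lt_of_le hk.2 hm
      have := hmono k m hkm
      have := (div_lt_div_iff₀ (hb k) (hb m)).1 this
      nlinarith
    calc AS * BT = ∑ k ∈ Finset.Ico i j, a k * BT := by rw [hAS, Finset.sum_mul]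
      _ < ∑ k ∈ Finset.Ico i j, AT * b k := Finset.sum_lt_sum_of_nonempty hS h1
      _ = AT * BS := by rw [hBS, Finset.mul_sum]
  rw [hAi, hBi, div_lt_div_iff₀ (by linarith) hBTpos]
  nlinarith
end

section
/- Fix n and 1/2 < p < 1, and let K_a ~ Binomial(n, p) and K_0 ~ Binomial(n, 1/2). The Minerva tail ratio τ(k) = P[K_a ≥ k] / P[K_0 ≥ k] is strictly monotone increasing in k for 0 ≤ k ≤ n, and τ(k) ≥ σ(k, p, n) for all k, with equality exactly at k = n. -/
/-- Binomial point probability. -/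
noncomputable def binomPMF (n : ℕ) (q : ℝ) (j : ℕ) : ℝ :=
  (n.choose j : ℝ) * q ^ j * (1 - q) ^ (n - j)

/-- Binomial upper tail `P[K ≥ k]` for `K ~ Binomial(n, q)`. -/
noncomputable def binomTail (n : ℕ) (q : ℝ) (k : ℕ) : ℝ :=
  ∑ j ∈ Finset.Icc k n, binomPMF n q j

namespace MinervaAux

/-- Likelihood ratio between `Binomial(n,p)` and `Binomial(n,1/2)`. -/
noncomputable def rho (n : ℕ) (p : ℝ) (j : ℕ) : ℝ := (2*p)^j * (2*(1-p))^(n-j)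

lemma half_pow (x : ℝ) (m : ℕ) : (1/2:ℝ)^m * (2*x)^m = x^m := by
  rw [← mul_pow, show (1/2:ℝ)*(2*x) = x by ring]

lemma pmf_pos {n : ℕ} {q : ℝ} (hq0 : 0 < q) (hq1 : q < 1) {j : ℕ} (hj : j ≤ n) :
    0 < binomPMF n q j := by
  have h0 : 0 < n.choose j := Nat.choose_pos hj
  have hc : (0:ℝ) < n.choose j := by exact_mod_cast h0
  have h1 : (0:ℝ) < 1 - q := by linarith
  unfold binomPMF
  positivity

lemma pmf_eq {n : ℕ} (p : ℝ) {j : ℕ} :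
    binomPMF n p j = binomPMF n (1/2) j * rho n p j := by
  unfold binomPMF rho
  have hp2 : ((1:ℝ)-1/2) = 1/2 := by norm_num
  rw [hp2]
  calc (n.choose j : ℝ) * p ^ j * (1 - p) ^ (n - j)
      = (n.choose j : ℝ) * ((1/2:ℝ)^j * (2*p)^j) * ((1/2:ℝ)^(n-j) * (2*(1-p))^(n-j)) := by
        rw [half_pow p j, half_pow (1-p) (n-j)]
    _ = _ := by ring

lemma rho_pos {n : ℕ} {p : ℝ} (hp : 1/2 < p) (hp1 : p < 1) (j : ℕ) : 0 < rho n p j := by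
  have h1 : (0:ℝ) < 2*p := by linarith
  have h2 : (0:ℝ) < 2*(1-p) := by linarith
  unfold rho; positivity

lemma rho_step {n : ℕ} {p : ℝ} (hp : 1/2 < p) (hp1 : p < 1) {k : ℕ} (hk : k < n) :
    rho n p k < rho n p (k+1) := by
  have hd : n - k = (n - (k+1)) + 1 := by omega
  unfold rho
  rw [hd, pow_succ, pow_succ]
  have h1 : (0:ℝ) < 2*p := by linarith
  have h2 : (0:ℝ) < 2*(1-p) := by linarith
  have hA : (0:ℝ) < (2*p)^k * (2*(1-p))^(n-(k+1)) := by positivity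
  nlinarith [hA, h1, h2]

lemma rho_mono {n : ℕ} {p : ℝ} (hp : 1/2 < p) (hp1 : p < 1) :
    ∀ {i j : ℕ}, i < j → j ≤ n → rho n p i < rho n p j := by
  intro i j hij hj
  induction j with
  | zero => omega
  | succ m ih =>
    rcases Nat.lt_succ_iff_lt_or_eq.mp hij with h | h
    · exact (ih h (by omega)).trans (rho_step hp hp1 (by omega))
    · subst h; exact rho_step hp hp1 (by omega)

lemma tail_half_pos {n k : ℕ} (hk : k ≤ n) : 0 < binomTail n (1/2) k := by
  apply Finset.sum_pos
  · intro j hj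
    exact pmf_pos (by norm_num) (by norm_num) (Finset.mem_Icc.mp hj).2
  · exact ⟨n, Finset.mem_Icc.mpr ⟨hk, le_rfl⟩⟩

lemma tail_eq {n : ℕ} (p : ℝ) (k : ℕ) :
    binomTail n p k = ∑ j ∈ Finset.Icc k n, binomPMF n (1/2) j * rho n p j := by
  exact Finset.sum_congr rfl fun j _ => pmf_eq p

/-- `τ(k) ≥ ρ(k) S(k)` with strictness for `k < n`. -/
lemma tail_ge {n : ℕ} {p : ℝ} (hp : 1/2 < p) (hp1 : p < 1) {k : ℕ} (hk : k ≤ n) :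
    rho n p k * binomTail n (1/2) k ≤ binomTail n p k := by
  rw [tail_eq p, binomTail, Finset.mul_sum]
  apply Finset.sum_le_sum
  intro j hj
  rw [Finset.mem_Icc] at hj
  rcases eq_or_lt_of_le hj.1 with h | h
  · subst h; ring_nf; exact le_rfl
  · have := (rho_mono hp hp1 h hj.2).le
    have hw := (pmf_pos (n := n) (by norm_num : (0:ℝ) < 1/2) (by norm_num) hj.2).le
    calc rho n p k * binomPMF n (1/2) j = binomPMF n (1/2) j * rho n p k := by ring
      _ ≤ binomPMF n (1/2) j * rho n p j := by
          exact mul_le_mul_of_nonneg_left this hw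

lemma tail_gt {n : ℕ} {p : ℝ} (hp : 1/2 < p) (hp1 : p < 1) {k : ℕ} (hk : k < n) :
    rho n p k * binomTail n (1/2) k < binomTail n p k := by
  rw [tail_eq p, binomTail, Finset.mul_sum]
  apply Finset.sum_lt_sum
  · intro j hj
    rw [Finset.mem_Icc] at hj
    rcases eq_or_lt_of_le hj.1 with h | h
    · subst h; ring_nf; exact le_rfl
    · have := (rho_mono hp hp1 h hj.2).le
      have hw := (pmf_pos (n := n) (by norm_num : (0:ℝ) < 1/2) (by norm_num) hj.2).le
      calc rho n p k * binomPMF n (1/2) j = binomPMF n (1/2) j * rho n p k := by ring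
        _ ≤ binomPMF n (1/2) j * rho n p j := mul_le_mul_of_nonneg_left this hw
  · refine ⟨n, Finset.mem_Icc.mpr ⟨hk.le, le_rfl⟩, ?_⟩
    have hw := pmf_pos (n := n) (by norm_num : (0:ℝ) < 1/2) (by norm_num) (le_refl n)
    have hr := rho_mono (n := n) hp hp1 hk le_rfl
    calc rho n p k * binomPMF n (1/2) n = binomPMF n (1/2) n * rho n p k := by ring
      _ < binomPMF n (1/2) n * rho n p n := by exact (mul_lt_mul_iff_right₀ hw).mpr hr

lemma tail_split {n : ℕ} (q : ℝ) {k : ℕ} (hk : k ≤ n) :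
    binomTail n q k = binomPMF n q k + binomTail n q (k+1) := by
  unfold binomTail
  have hset : Finset.Icc k n = insert k (Finset.Icc (k+1) n) := by
    ext x; simp only [Finset.mem_Icc, Finset.mem_insert]; omega
  rw [hset, Finset.sum_insert (by simp)]

lemma sigma_eq {n : ℕ} (p : ℝ) {k : ℕ} (hk : k ≤ n) :
    p ^ k * (1 - p) ^ (n - k) / (1 / 2 : ℝ) ^ n = rho n p k := by
  have h2 : (1/2:ℝ)^n = (1/2)^k * (1/2)^(n-k) := by
    rw [← pow_add]; congr 1; omega
  rw [h2, div_eq_iff (by positivity), rho]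
  refine Eq.symm ?_
  calc (2*p)^k * (2*(1-p))^(n-k) * ((1/2:ℝ)^k * (1/2)^(n-k))
      = ((1/2:ℝ)^k * (2*p)^k) * ((1/2:ℝ)^(n-k) * (2*(1-p))^(n-k)) := by ring
    _ = p^k * (1-p)^(n-k) := by rw [half_pow, half_pow]

/-- one step monotonicity -/
lemma tau_step {n : ℕ} {p : ℝ} (hp : 1/2 < p) (hp1 : p < 1) {k : ℕ} (hk : k < n) :
    binomTail n p k / binomTail n (1/2) k <
      binomTail n p (k+1) / binomTail n (1/2) (k+1) := by
  have hS := tail_half_pos (n := n) hk.le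
  have hS' := tail_half_pos (n := n) (k := k+1) hk
  rw [div_lt_div_iff₀ hS hS']
  have hTsplit := tail_split (n := n) p hk.le
  have hSsplit := tail_split (n := n) (1/2 : ℝ) hk.le
  rw [hTsplit, hSsplit, pmf_eq (n := n) p (j := k)]
  have hw := pmf_pos (n := n) (by norm_num : (0:ℝ) < 1/2) (by norm_num) hk.le
  -- suffices: rho k * S' < T'
  have key : rho n p k * binomTail n (1/2) (k+1) < binomTail n p (k+1) := by
    calc rho n p k * binomTail n (1/2) (k+1)
        < rho n p (k+1) * binomTail n (1/2) (k+1) := by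
          exact (mul_lt_mul_iff_left₀ hS').mpr (rho_step hp hp1 hk)
      _ ≤ binomTail n p (k+1) := tail_ge hp hp1 hk
  nlinarith [key, hw, hS']

end MinervaAux

open MinervaAux in
/-- The Minerva tail ratio `τ(k) = P[K_a ≥ k]/P[K_0 ≥ k]`
(`K_a ~ Binomial(n,p)`, `K_0 ~ Binomial(n,1/2)`) is strictly increasing in `k` on
`{0,…,n}`, dominates `σ(k, p, n) = p^k(1-p)^(n-k)/(1/2)^n`, with equality exactly at
`k = n`. -/
theorem minerva_tail_ratio_props (n : ℕ) (p : ℝ) (hp : 1 / 2 < p) (hp1 : p < 1) :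
    (∀ k j : ℕ, k < j → j ≤ n →
      binomTail n p k / binomTail n (1 / 2) k <
        binomTail n p j / binomTail n (1 / 2) j) ∧
    (∀ k ≤ n,
      p ^ k * (1 - p) ^ (n - k) / (1 / 2 : ℝ) ^ n ≤
        binomTail n p k / binomTail n (1 / 2) k) ∧
    (∀ k ≤ n,
      (binomTail n p k / binomTail n (1 / 2) k =
        p ^ k * (1 - p) ^ (n - k) / (1 / 2 : ℝ) ^ n) ↔ k = n) := by
  have hmono : ∀ k j : ℕ, k < j → j ≤ n →
      binomTail n p k / binomTail n (1 / 2) k <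
        binomTail n p j / binomTail n (1 / 2) j := by
    intro k j hkj hj
    induction j with
    | zero => omega
    | succ m ih =>
      rcases Nat.lt_succ_iff_lt_or_eq.mp hkj with h | h
      · exact (ih h (by omega)).trans (tau_step hp hp1 (by omega))
      · subst h; exact tau_step hp hp1 (by omega)
  have hge : ∀ k ≤ n,
      p ^ k * (1 - p) ^ (n - k) / (1 / 2 : ℝ) ^ n ≤
        binomTail n p k / binomTail n (1 / 2) k := by
    intro k hk
    rw [sigma_eq p hk, le_div_iff₀ (tail_half_pos hk)]
    exact tail_ge hp hp1 hk
  refine ⟨hmono, hge, ?_⟩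
  intro k hk
  constructor
  · intro heq
    by_contra hne
    have hkn : k < n := lt_of_le_of_ne hk hne
    have := tail_gt hp hp1 hkn
    rw [sigma_eq p hk] at heq
    have hS := tail_half_pos (n := n) hk
    rw [div_eq_iff hS.ne'] at heq
    nlinarith [this, heq]
  · intro hkn
    rw [hkn, sigma_eq p le_rfl]
    have hS := tail_half_pos (n := n) (le_refl n)
    rw [div_eq_iff hS.ne']
    have hT := tail_split (n := n) p le_rfl
    have : binomTail n p n = binomPMF n (1/2) n * rho n p n := by
      unfold binomTail
      rw [show Finset.Icc n n = {n} by simp, Finset.sum_singleton, pmf_eq]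
    rw [this]
    have hSn : binomTail n (1/2) n = binomPMF n (1/2) n := by
      unfold binomTail
      rw [show Finset.Icc n n = {n} by simp, Finset.sum_singleton]
    rw [hSn]; ring
end

section
/- (First-round efficiency) Fix n, 1/2 < p < 1, 0 < α < 1, and let K_a ~ Binomial(n, p), K_0 ~ Binomial(n, 1/2). If σ(k, p, n) ≥ 1/α then P[K_a ≥ k] / P[K_0 ≥ k] ≥ 1/α. That is, any sample satisfying the end-of-round BRAVO stopping condition also satisfies the first-round Minerva stopping condition. -/
/-- Any sample satisfying the end-of-round BRAVO stopping condition
`σ(k, p, n) ≥ 1/α` also satisfies the first-round Minerva stopping condition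
`P[K_a ≥ k]/P[K_0 ≥ k] ≥ 1/α`. -/
theorem bravo_implies_minerva (n k : ℕ) (p α : ℝ) (hp : 1 / 2 < p) (hp1 : p < 1)
    (hα0 : 0 < α) (hα1 : α < 1) (hk : k ≤ n)
    (hbravo : 1 / α ≤ p ^ k * (1 - p) ^ (n - k) / (1 / 2 : ℝ) ^ n) :
    1 / α ≤ binomTail n p k / binomTail n (1 / 2) k := by
  have hp0 : 0 < p := by linarith
  have h1p : 0 < 1 - p := by linarith
  have hle : 1 - p ≤ p := by linarith
  have hhalf : (0:ℝ) < (1/2:ℝ)^n := by positivity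
  set σ : ℝ := p ^ k * (1 - p) ^ (n - k) / (1 / 2 : ℝ) ^ n with hσ
  -- half pmf is constant on j ≤ n
  have hpmf_half : ∀ j, j ≤ n → binomPMF n (1/2) j = (n.choose j : ℝ) * (1/2:ℝ)^n := by
    intro j hj
    unfold binomPMF
    have : (1:ℝ) - 1/2 = 1/2 := by norm_num
    rw [this, mul_assoc, ← pow_add]
    congr 2
    omega
  -- termwise inequality
  have hterm : ∀ j ∈ Finset.Icc k n, σ * binomPMF n (1/2) j ≤ binomPMF n p j := by
    intro j hj
    simp only [Finset.mem_Icc] at hj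
    obtain ⟨hkj, hjn⟩ := hj
    rw [hpmf_half j hjn, hσ]
    have hcore : p ^ k * (1 - p) ^ (n - k) ≤ p ^ j * (1 - p) ^ (n - j) := by
      have h1 : p ^ j = p ^ k * p ^ (j - k) := by rw [← pow_add]; congr 1; omega
      have h2 : (1 - p) ^ (n - k) = (1 - p) ^ (n - j) * (1 - p) ^ (j - k) := by
        rw [← pow_add]; congr 1; omega
      rw [h1, h2]
      have h3 : (1 - p) ^ (j - k) ≤ p ^ (j - k) := pow_le_pow_left₀ h1p.le hle _
      have hpk : 0 < p ^ k := by positivity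
      have hnj : 0 < (1 - p) ^ (n - j) := by positivity
      calc p ^ k * ((1 - p) ^ (n - j) * (1 - p) ^ (j - k))
          ≤ p ^ k * ((1 - p) ^ (n - j) * p ^ (j - k)) := by
            apply mul_le_mul_of_nonneg_left _ hpk.le
            exact mul_le_mul_of_nonneg_left h3 hnj.le
        _ = p ^ k * p ^ (j - k) * (1 - p) ^ (n - j) := by ring
    have hc : (0:ℝ) ≤ (n.choose j : ℝ) := by positivity
    unfold binomPMF
    calc p ^ k * (1 - p) ^ (n - k) / (1/2:ℝ)^n * ((n.choose j : ℝ) * (1/2:ℝ)^n)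
        = (n.choose j : ℝ) * (p ^ k * (1 - p) ^ (n - k)) := by
          field_simp
      _ ≤ (n.choose j : ℝ) * (p ^ j * (1 - p) ^ (n - j)) :=
          mul_le_mul_of_nonneg_left hcore hc
      _ = (n.choose j : ℝ) * p ^ j * (1 - p) ^ (n - j) := by ring
  -- sum the termwise inequality
  have hsum : σ * binomTail n (1/2) k ≤ binomTail n p k := by
    unfold binomTail
    rw [Finset.mul_sum]
    exact Finset.sum_le_sum hterm
  -- positivity of the null tail
  have htail0 : 0 < binomTail n (1/2) k := by
    unfold binomTail
    apply Finset.sum_pos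
    · intro j hj
      simp only [Finset.mem_Icc] at hj
      rw [hpmf_half j hj.2]
      have : 0 < (n.choose j : ℝ) := by
        exact_mod_cast Nat.choose_pos hj.2
      positivity
    · exact ⟨k, Finset.mem_Icc.mpr ⟨le_refl k, hk⟩⟩
  have : σ ≤ binomTail n p k / binomTail n (1/2) k := by
    rw [le_div_iff₀ htail0]
    exact hsum
  linarith
end
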